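/- arXiv:2502.06936 — 4 statements merged into one kernel-verified Lean document; each statement's English description precedes it below -/
import Mathlib

section
/- The Jacobian determinant of the map F(x+iy) = (1 − 2y²) + i(2xy), viewed as a map ℝ² → ℝ², equals 8y², and furthermore 8y² = 2(1 − |F(c)|²)/(1 − |c|²) for all c = x+iy with |c| < 1. -/
/-- The disk map as a map ℝ² → ℝ²: `F(x+iy) = (1 − 2y²) + i(2xy)`. -/
def diskMapR2 (p : ℝ × ℝ) : ℝ × ℝ := (1 - 2 * p.2 ^ 2, 2 * p.1 * p.2)

/-- The Jacobian determinant of the disk map equals `8y²`, and for `|c| < 1` one has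
`8y² = 2(1 − |F(c)|²)/(1 − |c|²)` where `F(c) = c² + 1 − |c|²`. -/
theorem diskMap_jacobian (p : ℝ × ℝ) :
    LinearMap.det ((fderiv ℝ diskMapR2 p).toLinearMap) = 8 * p.2 ^ 2 ∧
    (p.1 ^ 2 + p.2 ^ 2 < 1 →
      8 * p.2 ^ 2 =
        2 * (1 - ‖(p.1 + p.2 * Complex.I) ^ 2 + 1 -
              ((‖p.1 + p.2 * Complex.I‖ : ℝ) ^ 2 : ℝ)‖ ^ 2) /
          (1 - ‖p.1 + p.2 * Complex.I‖ ^ 2)) := by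
  constructor
  · have h1 := (((hasFDerivAt_snd (𝕜 := ℝ) (p := p)).mul
      (hasFDerivAt_snd (𝕜 := ℝ) (p := p))).const_mul (2:ℝ)).const_sub 1
    have h2 := ((hasFDerivAt_fst (𝕜 := ℝ) (p := p)).const_mul (2:ℝ)).mul
      (hasFDerivAt_snd (𝕜 := ℝ) (p := p))
    have h : HasFDerivAt (fun q : ℝ × ℝ => (1 - 2 * (q.2 * q.2), 2 * q.1 * q.2)) _ p :=
      HasFDerivAt.prodMk h1 h2
    have hF : diskMapR2 = fun q : ℝ × ℝ => (1 - 2 * (q.2 * q.2), 2 * q.1 * q.2) := by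
      funext q; simp [diskMapR2, pow_two]
    rw [hF, h.fderiv, ← LinearMap.det_toMatrix (Module.Basis.finTwoProd ℝ), Matrix.det_fin_two]
    simp [LinearMap.toMatrix_apply, Module.Basis.finTwoProd_zero, Module.Basis.finTwoProd_one,
      Module.Basis.coe_finTwoProd_repr]
    ring
  · intro hlt
    have habs : ‖(p.1 : ℂ) + p.2 * Complex.I‖ ^ 2 = p.1 ^ 2 + p.2 ^ 2 := by
      rw [Complex.sq_norm, Complex.normSq_add_mul_I]
    have hF : ((p.1 : ℂ) + p.2 * Complex.I) ^ 2 + 1 -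
        ((‖(p.1 : ℂ) + p.2 * Complex.I‖ : ℝ) ^ 2 : ℝ) =
        ((1 - 2 * p.2 ^ 2 : ℝ) : ℂ) + ((2 * p.1 * p.2 : ℝ) : ℂ) * Complex.I := by
      rw [habs]
      apply Complex.ext <;>
        simp [pow_two, Complex.mul_re, Complex.mul_im] <;> ring
    have habsF : ‖((p.1 : ℂ) + p.2 * Complex.I) ^ 2 + 1 -
        ((‖(p.1 : ℂ) + p.2 * Complex.I‖ : ℝ) ^ 2 : ℝ)‖ ^ 2 =
        (1 - 2 * p.2 ^ 2) ^ 2 + (2 * p.1 * p.2) ^ 2 := by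
      rw [hF, Complex.sq_norm, Complex.normSq_add_mul_I]
    rw [habsF, habs]
    have hne : 1 - (p.1 ^ 2 + p.2 ^ 2) ≠ 0 := by linarith
    field_simp
    ring
end

section
/- The measure μ on the open unit disk with density 1/(1−|c|²) with respect to two-dimensional Lebesgue measure is invariant under the map F(c) = c² + 1 − |c|²: for every Borel set E ⊆ 𝔻, μ(F⁻¹(E)) = μ(E). -/
open MeasureTheory

/-- The disk map `F(c) = c² + 1 − |c|²`. -/
noncomputable def diskMap (c : ℂ) : ℂ := c ^ 2 + 1 - ((‖c‖ : ℝ) ^ 2 : ℝ)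

/-- The measure on the open unit disk with density `1/(1−|c|²)` with respect to
two-dimensional Lebesgue measure. -/
noncomputable def diskMeasure : Measure ℂ :=
  (volume.restrict (Metric.ball (0 : ℂ) 1)).withDensity
    (fun c => ENNReal.ofReal ((1 - ‖c‖ ^ 2)⁻¹))

noncomputable def dF (c : ℂ) : ℂ →L[ℝ] ℂ :=
  (2*c) • (ContinuousLinearMap.id ℝ ℂ)
    - Complex.ofRealCLM.comp ((2*c.re) • Complex.reCLM + (2*c.im) • Complex.imCLM)

theorem hasFDerivAt_diskMap (c : ℂ) : HasFDerivAt diskMap (dF c) c := by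
  have hfun : diskMap = fun z : ℂ => z^2 + 1 - ((z.re^2 + z.im^2 : ℝ) : ℂ) := by
    funext z
    simp [diskMap, ← Complex.ofReal_pow, Complex.sq_norm, sq, RCLike.mul_self_norm, Complex.normSq_apply]
  rw [hfun]
  have h2 : HasFDerivAt (fun z : ℂ => z^2) ((2*c) • ContinuousLinearMap.id ℝ ℂ) c := by
    have := ((hasDerivAt_pow 2 c).hasFDerivAt).restrictScalars ℝ
    refine this.congr_fderiv ?_
    ext h
    simp [pow_one]
    ring
  have h3 : HasFDerivAt (fun z : ℂ => (z.re^2 : ℝ)) ((2*c.re) • (Complex.reCLM : ℂ →L[ℝ] ℝ)) c := by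
    have := (Complex.reCLM.hasFDerivAt (x := c)).pow 2
    refine this.congr_fderiv ?_
    ext h; simp
  have h4 : HasFDerivAt (fun z : ℂ => (z.im^2 : ℝ)) ((2*c.im) • (Complex.imCLM : ℂ →L[ℝ] ℝ)) c := by
    have := (Complex.imCLM.hasFDerivAt (x := c)).pow 2
    refine this.congr_fderiv ?_
    ext h; simp
  have h5 := h3.add h4
  have h6 := (Complex.ofRealCLM.hasFDerivAt).comp c h5
  exact ((h2.add_const 1).sub h6)

theorem det_dF (c : ℂ) : (dF c).det = 8 * c.im^2 := by
  have : (dF c).det = LinearMap.det ((dF c) : ℂ →ₗ[ℝ] ℂ) := rfl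
  rw [this, ← LinearMap.det_toMatrix Complex.basisOneI, Matrix.det_fin_two]
  simp [LinearMap.toMatrix_apply, Complex.coe_basisOneI, dF, Complex.coe_basisOneI_repr]
  ring

theorem diskMap_re (c : ℂ) : (diskMap c).re = 1 - 2*c.im^2 := by
  have h := Complex.sq_norm c
  rw [Complex.normSq_apply] at h
  simp [diskMap, ← Complex.ofReal_pow, sq]
  nlinarith [h]

theorem diskMap_im (c : ℂ) : (diskMap c).im = 2*c.re*c.im := by
  simp [diskMap, ← Complex.ofReal_pow, sq]
  ring

theorem key_identity (c : ℂ) :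
    1 - ‖diskMap c‖ ^ 2 = 4 * c.im^2 * (1 - ‖c‖ ^ 2) := by
  rw [Complex.sq_norm, Complex.sq_norm, Complex.normSq_apply, Complex.normSq_apply,
    diskMap_re, diskMap_im]
  ring

theorem diskMap_neg (c : ℂ) : diskMap (-c) = diskMap c := by
  simp [diskMap]

theorem diskMap_inj : Set.InjOn diskMap {c : ℂ | 0 < c.im} := by
  rintro a ha b hb h
  have h1 := congrArg Complex.re h
  have h2 := congrArg Complex.im h
  rw [diskMap_re, diskMap_re] at h1
  rw [diskMap_im, diskMap_im] at h2
  simp only [Set.mem_setOf_eq] at ha hb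
  have hy : a.im = b.im := by nlinarith
  have hx : a.re = b.re := by
    rw [hy] at h2
    field_simp at h2
    exact h2
  exact Complex.ext hx hy

theorem exists_preimage (e : ℂ) (he : ‖e‖ < 1) :
    ∃ c : ℂ, 0 < c.im ∧ ‖c‖ < 1 ∧ diskMap c = e := by
  have huv : e.re^2 + e.im^2 < 1 := by
    have h := Complex.sq_norm e
    rw [Complex.normSq_apply] at h
    nlinarith [norm_nonneg e]
  have hu1 : e.re < 1 := by nlinarith
  have hpos : (0:ℝ) < (1 - e.re)/2 := by linarith
  set y := Real.sqrt ((1-e.re)/2) with hy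
  have hy0 : 0 < y := Real.sqrt_pos.mpr hpos
  have hysq : y^2 = (1-e.re)/2 := Real.sq_sqrt hpos.le
  have h4y : (2*y)^2 = 2*(1-e.re) := by rw [mul_pow, hysq]; ring
  have hx2 : (e.im/(2*y))^2 = e.im^2/(2*(1-e.re)) := by rw [div_pow, h4y]
  have hlt : (e.im/(2*y))^2 + y^2 < 1 := by
    have h5 : e.im^2/(2*(1-e.re)) < (1+e.re)/2 := by
      rw [div_lt_iff₀ (by linarith)]
      nlinarith
    rw [hx2, hysq]
    linarith
  refine ⟨⟨e.im/(2*y), y⟩, hy0, ?_, ?_⟩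
  · have habs : ‖(⟨e.im/(2*y), y⟩ : ℂ)‖ ^ 2 = (e.im/(2*y))^2 + y^2 := by
      rw [Complex.sq_norm, Complex.normSq_apply]; ring
    nlinarith [norm_nonneg (⟨e.im/(2*y), y⟩ : ℂ)]
  · apply Complex.ext
    · rw [diskMap_re]; show 1 - 2*y^2 = e.re; rw [hysq]; ring
    · rw [diskMap_im]; show 2 * (e.im/(2*y)) * y = e.im; field_simp

theorem line_null : volume {c : ℂ | c.im = 0} = 0 := by
  have h := Complex.volume_preserving_equiv_real_prod
  have heq : {c : ℂ | c.im = 0} = Complex.measurableEquivRealProd ⁻¹' (Set.univ ×ˢ {0}) := by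
    ext c
    simp [Complex.measurableEquivRealProd, eq_comm]
  rw [heq, h.measure_preimage (MeasurableSet.univ.prod (measurableSet_singleton 0)).nullMeasurableSet,
    Measure.volume_eq_prod, Measure.prod_prod]
  simp

theorem diskMap_continuous : Continuous diskMap := by
  unfold diskMap
  exact ((continuous_pow 2).add continuous_const).sub
    (Complex.continuous_ofReal.comp (continuous_norm.pow 2))

theorem diskMap_inj_lower : Set.InjOn diskMap {c : ℂ | c.im < 0} := by
  intro a ha b hb h
  have : -a = -b := diskMap_inj (show -a ∈ {c : ℂ | 0 < c.im} by simpa using ha)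
    (show -b ∈ {c : ℂ | 0 < c.im} by simpa using hb)
    (by rw [diskMap_neg, diskMap_neg]; exact h)
  simpa using this

theorem exists_preimage_lower (e : ℂ) (he : ‖e‖ < 1) :
    ∃ c : ℂ, c.im < 0 ∧ ‖c‖ < 1 ∧ diskMap c = e := by
  obtain ⟨c, h1, h2, h3⟩ := exists_preimage e he
  exact ⟨-c, by simpa using h1, by simpa using h2, by rw [diskMap_neg]; exact h3⟩

theorem half_lintegral (E : Set ℂ) (hE : MeasurableSet E)
    (hE𝔻 : E ⊆ Metric.ball (0 : ℂ) 1) (T : Set ℂ) (hT : MeasurableSet T)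
    (hTim : ∀ c ∈ T, c.im ≠ 0)
    (hinj : Set.InjOn diskMap T)
    (hsurj : ∀ e ∈ E, ∃ c ∈ T, ‖c‖ < 1 ∧ diskMap c = e) :
    ∫⁻ c in diskMap ⁻¹' E ∩ (Metric.ball 0 1 ∩ T),
        ENNReal.ofReal ((1 - ‖c‖ ^ 2)⁻¹)
      = (∫⁻ c in E, ENNReal.ofReal ((1 - ‖c‖ ^ 2)⁻¹)) / 2 := by
  set S := diskMap ⁻¹' E ∩ (Metric.ball 0 1 ∩ T) with hSdef
  have hS : MeasurableSet S :=
    (diskMap_continuous.measurable hE).inter (measurableSet_ball.inter hT)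
  have himg : diskMap '' S = E := by
    apply Set.Subset.antisymm
    · rintro _ ⟨c, ⟨hc1, _⟩, rfl⟩; exact hc1
    · intro e heE
      obtain ⟨c, hcT, hc1, hc2⟩ := hsurj e heE
      exact ⟨c, ⟨by simp [Set.mem_preimage, hc2]; exact heE,
        by simpa [Metric.mem_ball, Complex.dist_eq] using hc1, hcT⟩, hc2⟩
  have hinj' : Set.InjOn diskMap S := hinj.mono (by intro x hx; exact hx.2.2)
  have CoV := lintegral_image_eq_lintegral_abs_det_fderiv_mul volume hS
    (fun x _ => (hasFDerivAt_diskMap x).hasFDerivWithinAt) hinj'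
    (fun c => ENNReal.ofReal ((1 - ‖c‖ ^ 2)⁻¹) / 2)
  rw [himg] at CoV
  have h2 : (∫⁻ c in E, ENNReal.ofReal ((1 - ‖c‖ ^ 2)⁻¹)) / 2
      = ∫⁻ c in E, ENNReal.ofReal ((1 - ‖c‖ ^ 2)⁻¹) / 2 := by
    simp only [div_eq_mul_inv]
    rw [lintegral_mul_const' _ _ (by simp)]
  rw [h2, CoV]
  apply setLIntegral_congr_fun hS
  intro x hx
  beta_reduce
  obtain ⟨hxE, hxball, hxT⟩ := hx
  have hxlt : ‖x‖ < 1 := by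
    simpa [Metric.mem_ball, Complex.dist_eq] using hxball
  have him : x.im ≠ 0 := hTim x hxT
  have him2 : 0 < x.im ^ 2 := by positivity
  have ht : 0 < 1 - ‖x‖ ^ 2 := by
    nlinarith [norm_nonneg x]
  have e1 : ENNReal.ofReal (8 * x.im ^ 2) * (ENNReal.ofReal ((4 * x.im ^ 2 * (1 - ‖x‖ ^ 2))⁻¹) / 2)
      = ENNReal.ofReal (8 * x.im ^ 2 * (4 * x.im ^ 2 * (1 - ‖x‖ ^ 2))⁻¹) * 2⁻¹ := by
    rw [div_eq_mul_inv, ← mul_assoc, ← ENNReal.ofReal_mul (by positivity)]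
  have e2 : 8 * x.im ^ 2 * (4 * x.im ^ 2 * (1 - ‖x‖ ^ 2))⁻¹
      = 2 * (1 - ‖x‖ ^ 2)⁻¹ := by
    field_simp
    ring
  rw [det_dF, key_identity, abs_of_pos (by positivity), e1, e2,
    ENNReal.ofReal_mul (by norm_num), ENNReal.ofReal_ofNat,
    mul_comm (2 : ENNReal) _, mul_assoc, ENNReal.mul_inv_cancel two_ne_zero ENNReal.ofNat_ne_top, mul_one]

/-- The measure with density `1/(1−|c|²)` on the open unit disk is invariant under the
disk map: `μ(F⁻¹(E)) = μ(E)` for every Borel set `E ⊆ 𝔻`. -/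
theorem diskMeasure_invariant (E : Set ℂ) (hE : MeasurableSet E)
    (hE𝔻 : E ⊆ Metric.ball (0 : ℂ) 1) :
    diskMeasure (diskMap ⁻¹' E) = diskMeasure E := by
  have hpre : MeasurableSet (diskMap ⁻¹' E) := diskMap_continuous.measurable hE
  rw [diskMeasure, withDensity_apply _ hpre, withDensity_apply _ hE,
    Measure.restrict_restrict hpre, Measure.restrict_restrict hE,
    Set.inter_eq_self_of_subset_left hE𝔻]
  have hEball : ∀ e ∈ E, ‖e‖ < 1 := by
    intro e he
    simpa [Metric.mem_ball, Complex.dist_eq] using hE𝔻 he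
  have hsplit : diskMap ⁻¹' E ∩ Metric.ball 0 1 =
      (diskMap ⁻¹' E ∩ (Metric.ball 0 1 ∩ {c : ℂ | 0 < c.im})) ∪
      ((diskMap ⁻¹' E ∩ (Metric.ball 0 1 ∩ {c : ℂ | c.im < 0})) ∪
       (diskMap ⁻¹' E ∩ (Metric.ball 0 1 ∩ {c : ℂ | c.im = 0}))) := by
    ext c
    simp only [Set.mem_inter_iff, Set.mem_union, Set.mem_setOf_eq]
    constructor
    · rintro ⟨h1, h2⟩
      rcases lt_trichotomy c.im 0 with h | h | h
      · exact Or.inr (Or.inl ⟨h1, h2, h⟩)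
      · exact Or.inr (Or.inr ⟨h1, h2, h⟩)
      · exact Or.inl ⟨h1, h2, h⟩
    · rintro (⟨h1, h2, _⟩ | (⟨h1, h2, _⟩ | ⟨h1, h2, _⟩)) <;> exact ⟨h1, h2⟩
  have hmB : MeasurableSet (Metric.ball (0:ℂ) 1) := measurableSet_ball
  have hmP : MeasurableSet {c : ℂ | 0 < c.im} :=
    measurableSet_lt measurable_const Complex.measurable_im
  have hmN : MeasurableSet {c : ℂ | c.im < 0} :=
    measurableSet_lt Complex.measurable_im measurable_const
  have hmZ : MeasurableSet {c : ℂ | c.im = 0} :=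
    Complex.measurable_im (measurableSet_singleton 0)
  rw [hsplit, lintegral_union (((hpre.inter (hmB.inter hmN))).union
      (hpre.inter (hmB.inter hmZ))) ?hd1,
    lintegral_union (hpre.inter (hmB.inter hmZ)) ?hd2]
  case hd1 =>
    rw [Set.disjoint_left]
    rintro c ⟨_, _, hc⟩ (⟨_, _, hc'⟩ | ⟨_, _, hc'⟩) <;>
      simp only [Set.mem_setOf_eq] at hc hc' <;> linarith
  case hd2 =>
    rw [Set.disjoint_left]
    rintro c ⟨_, _, hc⟩ ⟨_, _, hc'⟩
    simp only [Set.mem_setOf_eq] at hc hc'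
    linarith
  have hzero : ∫⁻ c in diskMap ⁻¹' E ∩ (Metric.ball 0 1 ∩ {c : ℂ | c.im = 0}),
      ENNReal.ofReal ((1 - ‖c‖ ^ 2)⁻¹) = 0 := by
    apply setLIntegral_measure_zero
    apply measure_mono_null _ line_null
    intro c hc
    exact hc.2.2
  have hP := half_lintegral E hE hE𝔻 {c : ℂ | 0 < c.im} hmP
    (fun c hc => ne_of_gt hc) diskMap_inj
    (fun e he => by
      obtain ⟨c, h1, h2, h3⟩ := exists_preimage e (hEball e he)
      exact ⟨c, h1, h2, h3⟩)
  have hN := half_lintegral E hE hE𝔻 {c : ℂ | c.im < 0} hmN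
    (fun c hc => ne_of_lt hc) diskMap_inj_lower
    (fun e he => by
      obtain ⟨c, h1, h2, h3⟩ := exists_preimage_lower e (hEball e he)
      exact ⟨c, h1, h2, h3⟩)
  rw [hP, hN, hzero, add_zero, ENNReal.add_halves]
end

section
/- Let N, \overline{N} be linear superoperators, let 𝒜, ℬ be unitary channels (conjugation by unitaries in the k-fold tensor power), and let N_Haar be the Haar-averaging channel, which satisfies N_Haar ∘ 𝒱 = N_Haar for every unitary channel 𝒱. Define M(N,\overline{N}) = ‖N − N_Haar‖₂² + ‖\overline{N} − N_Haar‖₂² where ‖·‖₂ is the Frobenius norm on superoperators. Then M( (1/2)(N + \overline{N}∘𝒜), (1/2)(\overline{N} + N∘ℬ) ) ≤ M(N, \overline{N}). -/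
open Matrix
open scoped BigOperators

/-- The k-fold tensor (Kronecker) power `U^{⊗k}` of a d×d matrix. -/
def tensorPow (k d : ℕ) (U : Matrix (Fin d) (Fin d) ℂ) :
    Matrix (Fin k → Fin d) (Fin k → Fin d) ℂ :=
  Matrix.of fun f g => ∏ i, U (f i) (g i)

/-- The unitary (conjugation) channel `X ↦ U X Uᴴ` as a linear superoperator. -/
noncomputable def conjChan {m : Type*} [Fintype m] [DecidableEq m]
    (U : Matrix m m ℂ) : Matrix m m ℂ →ₗ[ℂ] Matrix m m ℂ :=
  (LinearMap.mulRight ℂ Uᴴ).comp (LinearMap.mulLeft ℂ U)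

/-- The Frobenius (Hilbert–Schmidt) norm of a superoperator:
`‖N‖₂ = sqrt( Σ_{αβγδ} |⟨α| N[|β⟩⟨γ|] |δ⟩|² )`. -/
noncomputable def frobNorm {m : Type*} [Fintype m] [DecidableEq m]
    (N : Matrix m m ℂ →ₗ[ℂ] Matrix m m ℂ) : ℝ :=
  Real.sqrt (∑ α, ∑ β, ∑ γ, ∑ δ, ‖N (Matrix.single β γ 1) α δ‖ ^ 2)

set_option linter.unusedSectionVars false

section Aux

variable {m : Type*} [Fintype m] [DecidableEq m]

/-- The "vectorization" of a superoperator into Euclidean space. -/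
noncomputable def toEuc (N : Matrix m m ℂ →ₗ[ℂ] Matrix m m ℂ) :
    EuclideanSpace ℂ (m × m × m × m) :=
  WithLp.toLp 2 (fun p : m × m × m × m => N (Matrix.single p.2.1 p.2.2.1 1) p.1 p.2.2.2)

lemma frobNorm_eq_norm (N : Matrix m m ℂ →ₗ[ℂ] Matrix m m ℂ) :
    frobNorm N = ‖toEuc N‖ := by
  rw [EuclideanSpace.norm_eq, frobNorm]
  congr 1
  rw [Fintype.sum_prod_type]
  refine Finset.sum_congr rfl fun α _ => ?_
  rw [Fintype.sum_prod_type]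
  refine Finset.sum_congr rfl fun β _ => ?_
  rw [Fintype.sum_prod_type]
  refine Finset.sum_congr rfl fun γ _ => ?_
  refine Finset.sum_congr rfl fun δ _ => ?_
  simp [toEuc]

lemma toEuc_add (X Y : Matrix m m ℂ →ₗ[ℂ] Matrix m m ℂ) :
    toEuc (X + Y) = toEuc X + toEuc Y := by
  ext p; simp [toEuc]

lemma toEuc_smul (c : ℂ) (X : Matrix m m ℂ →ₗ[ℂ] Matrix m m ℂ) :
    toEuc (c • X) = c • toEuc X := by
  ext p; simp [toEuc]

lemma frobNorm_nonneg (N : Matrix m m ℂ →ₗ[ℂ] Matrix m m ℂ) : 0 ≤ frobNorm N :=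
  Real.sqrt_nonneg _

lemma frobNorm_add_le (X Y : Matrix m m ℂ →ₗ[ℂ] Matrix m m ℂ) :
    frobNorm (X + Y) ≤ frobNorm X + frobNorm Y := by
  rw [frobNorm_eq_norm, frobNorm_eq_norm, frobNorm_eq_norm, toEuc_add]
  exact norm_add_le _ _

lemma frobNorm_smul (c : ℂ) (X : Matrix m m ℂ →ₗ[ℂ] Matrix m m ℂ) :
    frobNorm (c • X) = ‖c‖ * frobNorm X := by
  rw [frobNorm_eq_norm, frobNorm_eq_norm, toEuc_smul, norm_smul]

/-- Unitary mixing lemma: summing `|∑_b V b β * w b|²` over `β` preserves the sum of squares. -/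
lemma mix_sum (V : Matrix m m ℂ)
    (hV : ∀ b b', ∑ β, V b β * (starRingEnd ℂ) (V b' β) = if b = b' then 1 else 0)
    (w : m → ℂ) :
    ∑ β, ‖∑ b, V b β * w b‖ ^ 2 = ∑ b, ‖w b‖ ^ 2 := by
  have key : ∑ β, (∑ b, V b β * w b) * (starRingEnd ℂ) (∑ b, V b β * w b)
      = ∑ b, w b * (starRingEnd ℂ) (w b) := by
    have expand : ∀ β, (∑ b, V b β * w b) * (starRingEnd ℂ) (∑ b, V b β * w b)
        = ∑ b, ∑ b', (w b * (starRingEnd ℂ) (w b')) * (V b β * (starRingEnd ℂ) (V b' β)) := by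
      intro β
      rw [map_sum, Finset.sum_mul_sum]
      refine Finset.sum_congr rfl fun b _ => Finset.sum_congr rfl fun b' _ => ?_
      rw [_root_.map_mul]; ring
    simp_rw [expand]
    rw [Finset.sum_comm]
    refine Finset.sum_congr rfl fun b _ => ?_
    rw [Finset.sum_comm]
    simp_rw [← Finset.mul_sum, hV]
    simp
  simp_rw [Complex.mul_conj, ← Complex.ofReal_sum] at key
  have := Complex.ofReal_injective key
  simpa [Complex.sq_norm] using this

lemma conjChan_apply (V : Matrix m m ℂ) (X : Matrix m m ℂ) :
    conjChan V X = V * X * Vᴴ := by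
  simp [conjChan, LinearMap.mulLeft_apply, LinearMap.mulRight_apply, mul_assoc]

lemma conj_std (V : Matrix m m ℂ) (β γ : m) :
    V * Matrix.single β γ 1 * Vᴴ
      = ∑ b, ∑ c, (V b β * (starRingEnd ℂ) (V c γ)) • Matrix.single b c 1 := by
  ext i j
  simp only [Matrix.mul_apply, Matrix.single, Matrix.conjTranspose_apply,
    Matrix.sum_apply, Matrix.smul_apply, Matrix.of_apply, smul_eq_mul, mul_ite, ite_mul,
    mul_one, mul_zero, zero_mul, one_mul, RCLike.star_def]
  simp [ite_and, mul_ite, ite_mul, Finset.sum_ite_eq, Finset.sum_ite_eq']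

/-- Frobenius norm of a superoperator is invariant under precomposition with a
unitary conjugation channel. -/
lemma frobNorm_comp_conjChan (X : Matrix m m ℂ →ₗ[ℂ] Matrix m m ℂ)
    (V : Matrix m m ℂ) (hV : V * Vᴴ = 1) :
    frobNorm (X.comp (conjChan V)) = frobNorm X := by
  have hV' : ∀ b b', ∑ β, V b β * (starRingEnd ℂ) (V b' β) = if b = b' then 1 else 0 := by
    intro b b'
    have := congrFun (congrFun hV b) b'
    simpa [Matrix.mul_apply, Matrix.conjTranspose_apply, Matrix.one_apply, RCLike.star_def]
      using this
  have hVc : ∀ b b', ∑ β, (starRingEnd ℂ) (V b β) * (starRingEnd ℂ) ((starRingEnd ℂ) (V b' β))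
      = if b = b' then 1 else 0 := by
    intro b b'
    have h := congrArg (starRingEnd ℂ) (hV' b b')
    rw [map_sum, apply_ite (starRingEnd ℂ), _root_.map_one, _root_.map_zero] at h
    simp only [_root_.map_mul, Complex.conj_conj] at h
    simpa [Complex.conj_conj] using h
  unfold frobNorm
  congr 1
  refine Finset.sum_congr rfl fun α _ => ?_
  have e : ∀ (f : m → m → m → ℝ),
      (∑ β, ∑ γ, ∑ δ, f β γ δ) = ∑ δ, ∑ β, ∑ γ, f β γ δ := by
    intro f
    have h1 : (∑ β, ∑ γ, ∑ δ, f β γ δ) = ∑ β, ∑ δ, ∑ γ, f β γ δ :=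
      Finset.sum_congr rfl fun β _ => Finset.sum_comm
    rw [h1, Finset.sum_comm]
  rw [e, e fun β γ δ => ‖X (Matrix.single β γ 1) α δ‖ ^ 2]
  refine Finset.sum_congr rfl fun δ _ => ?_
  set y : m → m → ℂ := fun b c => X (Matrix.single b c 1) α δ with hy
  have happ : ∀ β γ, (X.comp (conjChan V)) (Matrix.single β γ 1) α δ
      = ∑ c, (starRingEnd ℂ) (V c γ) * (∑ b, V b β * y b c) := by
    intro β γ
    rw [LinearMap.comp_apply, conjChan_apply, conj_std]
    simp_rw [map_sum, _root_.map_smul, Matrix.sum_apply, Matrix.smul_apply, smul_eq_mul]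
    rw [Finset.sum_comm]
    refine Finset.sum_congr rfl fun c _ => ?_
    rw [Finset.mul_sum]
    refine Finset.sum_congr rfl fun b _ => ?_
    ring
  simp_rw [happ]
  have step1 : ∀ β, (∑ γ, ‖∑ c, (starRingEnd ℂ) (V c γ)
        * (∑ b, V b β * y b c)‖ ^ 2)
      = ∑ c, ‖∑ b, V b β * y b c‖ ^ 2 := by
    intro β
    exact mix_sum (Matrix.of fun c γ => (starRingEnd ℂ) (V c γ)) (fun b b' => hVc b b') _
  simp_rw [step1]
  calc (∑ β, ∑ c, ‖∑ b, V b β * y b c‖ ^ 2)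
      = ∑ c, ∑ β, ‖∑ b, V b β * y b c‖ ^ 2 := Finset.sum_comm
    _ = ∑ c, ∑ b, ‖y b c‖ ^ 2 :=
        Finset.sum_congr rfl fun c _ => mix_sum V hV' _
    _ = ∑ b, ∑ c, ‖y b c‖ ^ 2 := Finset.sum_comm
    _ = ∑ β, ∑ γ, ‖X (Matrix.single β γ 1) α δ‖ ^ 2 := by
        simp only [hy]

end Aux

lemma tensorPow_unitary (k d : ℕ) (U : Matrix (Fin d) (Fin d) ℂ)
    (hU : U * Uᴴ = 1) : tensorPow k d U * (tensorPow k d U)ᴴ = 1 := by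
  ext f g
  simp only [Matrix.mul_apply, tensorPow, Matrix.conjTranspose_apply, Matrix.of_apply,
    RCLike.star_def, map_prod]
  have hmul : ∀ h : Fin k → Fin d,
      (∏ i, U (f i) (h i)) * ∏ i, (starRingEnd ℂ) (U (g i) (h i))
      = ∏ i, (U (f i) (h i) * (starRingEnd ℂ) (U (g i) (h i))) := by
    intro h; rw [Finset.prod_mul_distrib]
  simp_rw [hmul]
  rw [← Fintype.prod_sum fun i x => U (f i) x * (starRingEnd ℂ) (U (g i) x)]
  have hentry : ∀ a b : Fin d,
      ∑ x, U a x * (starRingEnd ℂ) (U b x) = if a = b then 1 else 0 := by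
    intro a b
    have := congrFun (congrFun hU a) b
    simpa [Matrix.mul_apply, Matrix.conjTranspose_apply, Matrix.one_apply, RCLike.star_def]
      using this
  simp_rw [hentry]
  rw [Finset.prod_boole, Matrix.one_apply]
  simp [funext_iff]

/-- Monotonicity of `M(N, N̄) = ‖N − N_Haar‖₂² + ‖N̄ − N_Haar‖₂²` under the Thue–Morse
channel update, where `N_Haar` is invariant under composition with any unitary channel. -/
theorem tm_channel_monotone (d k : ℕ) (A B : Matrix (Fin d) (Fin d) ℂ)
    (hA : A ∈ Matrix.unitaryGroup (Fin d) ℂ) (hB : B ∈ Matrix.unitaryGroup (Fin d) ℂ)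
    (NHaar N Nbar : Matrix (Fin k → Fin d) (Fin k → Fin d) ℂ →ₗ[ℂ]
      Matrix (Fin k → Fin d) (Fin k → Fin d) ℂ)
    (hHaar : ∀ V ∈ Matrix.unitaryGroup (Fin d) ℂ,
      NHaar.comp (conjChan (tensorPow k d V)) = NHaar) :
    frobNorm ((1 / 2 : ℂ) • (N + Nbar.comp (conjChan (tensorPow k d A))) - NHaar) ^ 2 +
      frobNorm ((1 / 2 : ℂ) • (Nbar + N.comp (conjChan (tensorPow k d B))) - NHaar) ^ 2 ≤
    frobNorm (N - NHaar) ^ 2 + frobNorm (Nbar - NHaar) ^ 2 := by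
  set s := frobNorm (N - NHaar) with hs
  set t := frobNorm (Nbar - NHaar) with ht
  have hs0 : 0 ≤ s := frobNorm_nonneg _
  have ht0 : 0 ≤ t := frobNorm_nonneg _
  have hAU : tensorPow k d A * (tensorPow k d A)ᴴ = 1 :=
    tensorPow_unitary k d A ((Matrix.mem_unitaryGroup_iff).mp hA)
  have hBU : tensorPow k d B * (tensorPow k d B)ᴴ = 1 :=
    tensorPow_unitary k d B ((Matrix.mem_unitaryGroup_iff).mp hB)
  have key : ∀ (P Q : Matrix (Fin k → Fin d) (Fin k → Fin d) ℂ →ₗ[ℂ]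
      Matrix (Fin k → Fin d) (Fin k → Fin d) ℂ) (V : Matrix (Fin d) (Fin d) ℂ),
      V ∈ Matrix.unitaryGroup (Fin d) ℂ →
      tensorPow k d V * (tensorPow k d V)ᴴ = 1 →
      frobNorm ((1 / 2 : ℂ) • (P + Q.comp (conjChan (tensorPow k d V))) - NHaar)
        ≤ (frobNorm (P - NHaar) + frobNorm (Q - NHaar)) / 2 := by
    intro P Q V hVU hVT
    have e : (1 / 2 : ℂ) • (P + Q.comp (conjChan (tensorPow k d V))) - NHaar
        = (1 / 2 : ℂ) • (P - NHaar)
          + (1 / 2 : ℂ) • (Q.comp (conjChan (tensorPow k d V)) - NHaar) := by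
      module
    have e2 : Q.comp (conjChan (tensorPow k d V)) - NHaar
        = (Q - NHaar).comp (conjChan (tensorPow k d V)) := by
      conv_lhs => rw [← hHaar V hVU]
      rw [LinearMap.sub_comp]
    rw [e, e2]
    calc frobNorm _ ≤ frobNorm ((1 / 2 : ℂ) • (P - NHaar))
          + frobNorm ((1 / 2 : ℂ) • ((Q - NHaar).comp (conjChan (tensorPow k d V)))) :=
        frobNorm_add_le _ _
      _ = (frobNorm (P - NHaar) + frobNorm (Q - NHaar)) / 2 := by
        rw [frobNorm_smul, frobNorm_smul, frobNorm_comp_conjChan _ _ hVT,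
          show ‖(1 / 2 : ℂ)‖ = 1 / 2 by norm_num]
        ring
  have h1 := key N Nbar A hA hAU
  have h2 := key Nbar N B hB hBU
  have hn1 : 0 ≤ frobNorm ((1 / 2 : ℂ) • (N + Nbar.comp (conjChan (tensorPow k d A))) - NHaar) :=
    frobNorm_nonneg _
  have hn2 : 0 ≤ frobNorm ((1 / 2 : ℂ) • (Nbar + N.comp (conjChan (tensorPow k d B))) - NHaar) :=
    frobNorm_nonneg _
  nlinarith [sq_nonneg (s - t), sq_nonneg (s + t), h1, h2, hn1, hn2]
end

section
/- Suppose superoperators N, \overline{N} and unitary channels 𝒜, ℬ (with 𝒜ℬ denoting composition) satisfy N = \overline{N}∘𝒜 = \overline{N}∘(ℬ𝒜) = \overline{N}∘(𝒜ℬℬ𝒜) and \overline{N} = N∘ℬ = N∘(𝒜ℬ) = N∘(ℬ𝒜𝒜ℬ). Then N∘𝒜 = N∘ℬ = N and \overline{N}∘𝒜 = \overline{N}∘ℬ = \overline{N}. -/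
open Matrix

lemma conjChan_comp_conjH {m : Type*} [Fintype m] [DecidableEq m]
    (U : Matrix m m ℂ) (hU : U ∈ Matrix.unitaryGroup m ℂ) :
    (conjChan U).comp (conjChan Uᴴ) = LinearMap.id := by
  have h1 : U * Uᴴ = 1 := by
    have := hU.2
    simpa [Matrix.star_eq_conjTranspose] using this
  ext X
  simp [conjChan, Matrix.mul_assoc, ← Matrix.mul_assoc, h1]
  rw [Matrix.mul_assoc, h1, Matrix.mul_one]

lemma cancel_conjChan {m : Type*} [Fintype m] [DecidableEq m]
    (U : Matrix m m ℂ) (hU : U ∈ Matrix.unitaryGroup m ℂ)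
    {f g : Matrix m m ℂ →ₗ[ℂ] Matrix m m ℂ}
    (h : f.comp (conjChan U) = g.comp (conjChan U)) : f = g := by
  have := congrArg (fun k => k.comp (conjChan Uᴴ)) h
  simpa [LinearMap.comp_assoc, conjChan_comp_conjH U hU] using this

/-- If superoperators `N, N̄` and unitary channels `𝒜, ℬ` satisfy
`N = N̄∘𝒜 = N̄∘(ℬ𝒜) = N̄∘(𝒜ℬℬ𝒜)` and `N̄ = N∘ℬ = N∘(𝒜ℬ) = N∘(ℬ𝒜𝒜ℬ)`, then
`N∘𝒜 = N∘ℬ = N` and `N̄∘𝒜 = N̄∘ℬ = N̄`. -/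
theorem tm_equality_chain {m : Type*} [Fintype m] [DecidableEq m]
    (UA UB : Matrix m m ℂ)
    (hUA : UA ∈ Matrix.unitaryGroup m ℂ) (hUB : UB ∈ Matrix.unitaryGroup m ℂ)
    (N Nbar : Matrix m m ℂ →ₗ[ℂ] Matrix m m ℂ)
    (h1 : N = Nbar.comp (conjChan UA))
    (h2 : N = Nbar.comp ((conjChan UB).comp (conjChan UA)))
    (h3 : N = Nbar.comp ((conjChan UA).comp ((conjChan UB).comp
            ((conjChan UB).comp (conjChan UA)))))
    (h4 : Nbar = N.comp (conjChan UB))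
    (h5 : Nbar = N.comp ((conjChan UA).comp (conjChan UB)))
    (h6 : Nbar = N.comp ((conjChan UB).comp ((conjChan UA).comp
            ((conjChan UA).comp (conjChan UB))))) :
    N.comp (conjChan UA) = N ∧ N.comp (conjChan UB) = N ∧
      Nbar.comp (conjChan UA) = Nbar ∧ Nbar.comp (conjChan UB) = Nbar := by
  -- from h1 and h2: N̄ ∘ B = N̄ (cancel A on the right)
  have hNbarB : Nbar.comp (conjChan UB) = Nbar := by
    apply cancel_conjChan UA hUA
    rw [LinearMap.comp_assoc, ← h2, ← h1]
  -- from h4 and h5: N ∘ A = N (cancel B on the right)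
  have hNA : N.comp (conjChan UA) = N := by
    apply cancel_conjChan UB hUB
    rw [LinearMap.comp_assoc, ← h5, ← h4]
  -- N̄ ∘ B = N̄ with h4 gives N ∘ B ∘ B = N ∘ B, cancel B: N ∘ B = N
  have hNB : N.comp (conjChan UB) = N := by
    apply cancel_conjChan UB hUB
    have := hNbarB
    rw [h4] at this
    rw [LinearMap.comp_assoc] at this ⊢
    rw [this, ← h4]
  have hNeq : Nbar = N := by rw [h4, hNB]
  exact ⟨hNA, hNB, by rw [hNeq, hNA], by rw [hNeq, hNB]⟩
end
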